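/- Let C be a category with faithful functor Q represented by an object A₀, and let A⁰ be a left or right indicator in C. Then an automorphism Φ of C is inner if and only if there exist isomorphisms σ : A₀ → Φ(A₀) and τ : A⁰ → Φ(A⁰) such that Φ(ν) = τ ∘ ν ∘ σ⁻¹ for every morphism ν : A₀ → A⁰. -/

import Mathlib

/-!
An inner automorphism `η : 𝟭 C ≅ Φ` restricts to `σ = η_{A₀}` and `τ = η_{A⁰}`. Conversely,
`σ` and the full faithfulness of `Φ` transport the representation `(A₀ ⟶ A) ≃ Q A` of `Q` to
a bijection `s_A : Q A ≃ Q (Φ A)`, `Q α x₀ ↦ Q (σ ≫ Φ α) x₀`, natural in `A`. The relation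
`σ ≫ Φ ν = ν ≫ τ` is exactly what makes `s_A` compatible with the morphisms into (or out of) the
indicator `A⁰`, so each `s_A` is induced by an isomorphism `γ_A : A ≅ Φ A`; since `Q` is
faithful, the naturality of `s` passes to `γ`.
-/

open CategoryTheory

universe u v w

namespace CategoryTheory

variable {C : Type u} [Category.{v} C]

def IsRightIndicator (Q : C ⥤ Type w) (T : C) : Prop :=
  ∀ (A B : C) (s : Q.obj A ≃ Q.obj B),
    (∀ ν : B ⟶ T, ∃ μ : A ⟶ T, Q.map μ = Q.map ν ∘ ⇑s) → ∃ γ : A ≅ B, Q.map γ.hom = ⇑s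

def IsLeftIndicator (Q : C ⥤ Type w) (T : C) : Prop :=
  ∀ (A B : C) (s : Q.obj A ≃ Q.obj B),
    (∀ ν : T ⟶ A, ∃ μ : T ⟶ B, Q.map μ = ⇑s ∘ Q.map ν) → ∃ γ : A ≅ B, Q.map γ.hom = ⇑s

def Equivalence.ofCompEqId {Φ Φinv : C ⥤ C} (hΦ1 : Φ ⋙ Φinv = 𝟭 C) (hΦ2 : Φinv ⋙ Φ = 𝟭 C) :
    C ≌ C :=
  Equivalence.mk Φ Φinv (eqToIso hΦ1.symm) (eqToIso hΦ2)

def Functor.Faithful.natIsoOfLifts {D E : Type*} [Category* D] [Category* E] (Q : C ⥤ E)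
    [Q.Faithful] {F G : D ⥤ C} (s : F ⋙ Q ≅ G ⋙ Q) (γ : ∀ X, F.obj X ≅ G.obj X)
    (hγ : ∀ X, Q.map (γ X).hom = s.hom.app X) : F ≅ G :=
  NatIso.ofComponents γ fun f => Q.map_injective <| by
    simpa only [Functor.comp_map, Functor.map_comp, hγ] using s.hom.naturality f

section Transport

variable {Q : C ⥤ Type w} {A₀ : C} {x₀ : Q.obj A₀}
  (hrep : ∀ (A : C) (a : Q.obj A), ∃! α : A₀ ⟶ A, Q.map α x₀ = a)
  {Φ : C ⥤ C} (hΦ : Φ.FullyFaithful) (σ : A₀ ≅ Φ.obj A₀)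

noncomputable def repEquiv (A : C) : (A₀ ⟶ A) ≃ Q.obj A :=
  Equiv.ofBijective (fun α => Q.map α x₀) ((Function.bijective_iff_existsUnique _).mpr (hrep A))

noncomputable def transportEquiv (A : C) : Q.obj A ≃ Q.obj (Φ.obj A) :=
  (repEquiv hrep A).symm.trans <|
    (hΦ.homEquiv.trans σ.symm.homFromEquiv).trans (repEquiv hrep (Φ.obj A))

lemma transportEquiv_map {A : C} (α : A₀ ⟶ A) :
    transportEquiv hrep hΦ σ A (Q.map α x₀) = Q.map (σ.hom ≫ Φ.map α) x₀ := by
  change transportEquiv hrep hΦ σ A (repEquiv hrep A α) = _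
  simp only [transportEquiv, Equiv.trans_apply, Equiv.symm_apply_apply]
  rfl

noncomputable def transportIso : Q ≅ Φ ⋙ Q :=
  NatIso.ofComponents (fun A => (transportEquiv hrep hΦ σ A).toIso) fun {A B} f => by
    ext a
    obtain ⟨α, rfl⟩ := (repEquiv hrep A).surjective a
    change transportEquiv hrep hΦ σ B (Q.map f (Q.map α x₀)) =
      Q.map (Φ.map f) (transportEquiv hrep hΦ σ A (Q.map α x₀))
    rw [← Functor.map_comp_apply, transportEquiv_map, transportEquiv_map,
      ← Functor.map_comp_apply, Φ.map_comp, Category.assoc]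

variable {T : C} {τ : T ≅ Φ.obj T} (hστ : ∀ δ : A₀ ⟶ T, σ.hom ≫ Φ.map δ = δ ≫ τ.hom)
include hστ

lemma exists_lift_transportIso_of_isRightIndicator (hT : IsRightIndicator Q T) (A : C) :
    ∃ γ : A ≅ Φ.obj A, Q.map γ.hom = (transportIso hrep hΦ σ).hom.app A := by
  refine (hT A (Φ.obj A) (transportEquiv hrep hΦ σ A) fun ν => ?_).imp
    fun _ hγ => TypeCat.homEquiv.injective hγ
  refine ⟨hΦ.preimage (ν ≫ τ.hom), funext fun a => ?_⟩
  obtain ⟨α, rfl⟩ := (repEquiv hrep A).surjective a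
  have hα : α ≫ hΦ.preimage (ν ≫ τ.hom) = σ.hom ≫ Φ.map α ≫ ν := by
    rw [← cancel_mono τ.hom, ← hστ, Φ.map_comp, hΦ.map_preimage]
    simp only [Category.assoc]
  change Q.map _ (Q.map α x₀) = Q.map ν (transportEquiv hrep hΦ σ A (Q.map α x₀))
  rw [transportEquiv_map, ← Functor.map_comp_apply, ← Functor.map_comp_apply,
    hα, Category.assoc]

lemma exists_lift_transportIso_of_isLeftIndicator (hT : IsLeftIndicator Q T) (A : C) :
    ∃ γ : A ≅ Φ.obj A, Q.map γ.hom = (transportIso hrep hΦ σ).hom.app A := by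
  refine (hT A (Φ.obj A) (transportEquiv hrep hΦ σ A) fun ν => ?_).imp
    fun _ hγ => TypeCat.homEquiv.injective hγ
  refine ⟨τ.hom ≫ Φ.map ν, funext fun t => ?_⟩
  obtain ⟨β, rfl⟩ := (repEquiv hrep T).surjective t
  change Q.map _ (Q.map β x₀) = transportEquiv hrep hΦ σ A (Q.map ν (Q.map β x₀))
  rw [← Functor.map_comp_apply, ← Functor.map_comp_apply, transportEquiv_map,
    Φ.map_comp, ← Category.assoc σ.hom, hστ, Category.assoc]

end Transport

end CategoryTheory

/-- Let `C` be a category with a faithful functor `Q : C ⥤ Type`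
represented by an object `A₀` (via `x₀`), and let `Atop` be a right or left indicator in
`C`.  Then an automorphism `Φ` of `C` is inner if and only if there exist isomorphisms
`σ : A₀ ≅ Φ(A₀)` and `τ : Atop ≅ Φ(Atop)` such that `Φ(ν) = τ ∘ ν ∘ σ⁻¹` for every
morphism `ν : A₀ ⟶ Atop`. -/
theorem stmt13 {C : Type u} [Category.{v} C] (Q : C ⥤ Type w) [Q.Faithful]
    (A₀ : C) (x₀ : Q.obj A₀)
    (hrep : ∀ (A : C) (a : Q.obj A), ∃! α : A₀ ⟶ A, Q.map α x₀ = a)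
    (Atop : C)
    (hind :
      (∀ (A B : C) (s : Q.obj A ≃ Q.obj B),
        (∀ ν : B ⟶ Atop, ∃ μ : A ⟶ Atop, Q.map μ = Q.map ν ∘ ⇑s) →
        ∃ γ : A ≅ B, Q.map γ.hom = ⇑s) ∨
      (∀ (A B : C) (s : Q.obj A ≃ Q.obj B),
        (∀ ν : Atop ⟶ A, ∃ μ : Atop ⟶ B, Q.map μ = ⇑s ∘ Q.map ν) →
        ∃ γ : A ≅ B, Q.map γ.hom = ⇑s))
    (Φ Φinv : C ⥤ C) (hΦ1 : Φ ⋙ Φinv = 𝟭 C) (hΦ2 : Φinv ⋙ Φ = 𝟭 C) :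
    Nonempty (𝟭 C ≅ Φ) ↔
      ∃ (σ : A₀ ≅ Φ.obj A₀) (τ : Atop ≅ Φ.obj Atop),
        ∀ ν : A₀ ⟶ Atop, Φ.map ν = σ.inv ≫ ν ≫ τ.hom := by
  refine ⟨fun ⟨η⟩ => ⟨η.app A₀, η.app Atop, fun ν => (NatIso.naturality_1 η ν).symm⟩, ?_⟩
  rintro ⟨σ, τ, hστ⟩
  have hsq : ∀ δ : A₀ ⟶ Atop, σ.hom ≫ Φ.map δ = δ ≫ τ.hom := fun δ => by
    rw [hστ, Iso.hom_inv_id_assoc]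
  have hΦ := (Equivalence.ofCompEqId hΦ1 hΦ2).fullyFaithfulFunctor
  have hlift (A : C) : ∃ γ : A ≅ Φ.obj A, Q.map γ.hom = (transportIso hrep hΦ σ).hom.app A :=
    hind.elim (exists_lift_transportIso_of_isRightIndicator hrep hΦ σ hsq · A)
      (exists_lift_transportIso_of_isLeftIndicator hrep hΦ σ hsq · A)
  choose γ hγ using hlift
  exact ⟨Functor.Faithful.natIsoOfLifts Q (transportIso hrep hΦ σ) γ hγ⟩
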